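/- arXiv:1402.1970 — 3 statements merged into one kernel-verified Lean document; each statement's English description precedes it below -/
import Mathlib

section
/- Let q be a prime dividing the positive integer N. Then the cycle of gaps of qN consists of q concatenated copies of the cycle of gaps of N: the totatives of qN are exactly the integers γ + jN with γ a totative of N and 0 ≤ j ≤ q − 1, and consequently n_{g,j'}(qN) = q·n_{g,j'}(N) for every integer g ≥ 1 and every length j' ≥ 1. -/
/-!
Since `q ∣ N`, an integer is coprime to `qN` exactly when it is coprime to `N`, and coprimality
to `N` is `N`-periodic. So `[1, qN]` splits into `q` translates of `[1, N]` by multiples of `N`,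
each carrying the same totatives, and being a driving term, which depends only on the set of
totatives, is an `N`-periodic condition; counting it over `q` full periods gives the factor `q`.
-/

/-- `nGaps N g j` is the number of driving terms of length `j` for the gap `g`
in the cycle of gaps of `N`. -/
def nGaps (N g j : ℕ) : ℕ :=
  ((Finset.Icc 1 N).filter (fun a =>
    Nat.gcd a N = 1 ∧ Nat.gcd (a + g) N = 1 ∧
      ((Finset.Ioo a (a + g)).filter (fun b => Nat.gcd b N = 1)).card = j - 1)).card

open Finset Function

namespace Nat

theorem coprime_mul_iff_right_of_dvd {a q N : ℕ} (hdvd : q ∣ N) :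
    Coprime a (q * N) ↔ Coprime a N := by
  rw [coprime_mul_iff_right, and_iff_right_iff_imp]
  exact fun h => h.coprime_dvd_right hdvd

theorem periodic_coprime_left (N : ℕ) : Periodic (Coprime · N) N :=
  fun _ => propext coprime_add_self_left

theorem mem_Icc_one_mul_iff {a q N : ℕ} :
    a ∈ Icc 1 (q * N) ↔ ∃ γ ∈ Icc 1 N, ∃ j < q, a = γ + j * N := by
  simp only [mem_Icc]
  constructor
  · rintro ⟨ha, haq⟩
    have hN : 0 < N := Nat.pos_of_ne_zero fun h => by simp [h] at haq; omega
    refine ⟨(a - 1) % N + 1, ⟨by omega, Nat.mod_lt _ hN⟩, (a - 1) / N,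
      (Nat.div_lt_iff_lt_mul hN).2 (by omega), ?_⟩
    have := Nat.mod_add_div' (a - 1) N
    omega
  · rintro ⟨γ, ⟨hγ, hγN⟩, j, hj, rfl⟩
    have : (j + 1) * N ≤ q * N := Nat.mul_le_mul_right N hj
    constructor <;> nlinarith

theorem card_filter_Ico_add_mul_of_periodic {p : ℕ → Prop} [DecidablePred p] {N : ℕ}
    (hp : Periodic p N) (n k : ℕ) : #{x ∈ Ico n (n + k * N) | p x} = k * count p N := by
  induction k with
  | zero => simp
  | succ k ih =>
    rw [add_mul, one_mul, ← add_assoc,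
      ← Ico_union_Ico_eq_Ico (Nat.le_add_right n (k * N)) (Nat.le_add_right _ N), filter_union,
      card_union_of_disjoint (disjoint_filter_filter (Ico_disjoint_Ico_consecutive _ _ _)), ih,
      filter_Ico_card_eq_of_periodic _ _ p hp, add_mul, one_mul]

theorem card_filter_Icc_one_mul_of_periodic {p : ℕ → Prop} [DecidablePred p] {N : ℕ}
    (hp : Periodic p N) (k : ℕ) :
    #{x ∈ Icc 1 (k * N) | p x} = k * #{x ∈ Icc 1 N | p x} := by
  have hIcc (m : ℕ) : Icc 1 m = Ico 1 (1 + m) := by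
    ext; simp only [mem_Icc, mem_Ico]; omega
  rw [hIcc, hIcc, card_filter_Ico_add_mul_of_periodic hp,
    ← one_mul N, card_filter_Ico_add_mul_of_periodic hp, one_mul, one_mul]

end Nat

/-- `T` plays the role of the set of totatives. -/
def IsDrivingTerm (T : ℕ → Prop) [DecidablePred T] (g j a : ℕ) : Prop :=
  T a ∧ T (a + g) ∧ #{b ∈ Ioo a (a + g) | T b} = j - 1

instance {T : ℕ → Prop} [DecidablePred T] (g j : ℕ) : DecidablePred (IsDrivingTerm T g j) :=
  fun _ => inferInstanceAs (Decidable (_ ∧ _ ∧ _))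

theorem nGaps_eq_card_isDrivingTerm (N g j : ℕ) :
    nGaps N g j = #{a ∈ Icc 1 N | IsDrivingTerm (Nat.Coprime · N) g j a} := rfl

theorem isDrivingTerm_congr {T T' : ℕ → Prop} [DecidablePred T] [DecidablePred T']
    (h : ∀ b, T b ↔ T' b) (g j a : ℕ) : IsDrivingTerm T g j a ↔ IsDrivingTerm T' g j a := by
  simp only [IsDrivingTerm, h]

theorem Function.Periodic.isDrivingTerm {T : ℕ → Prop} [DecidablePred T] {N : ℕ}
    (hT : Periodic T N) (g j : ℕ) : Periodic (IsDrivingTerm T g j) N := by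
  intro a
  have hcount : #{b ∈ Ioo (a + N) (a + g + N) | T b} = #{b ∈ Ioo a (a + g) | T b} := by
    rw [← map_add_right_Ioo, filter_map, card_map]
    exact congrArg card (filter_congr fun b _ => by simp [hT b])
  simp only [IsDrivingTerm, hcount, hT a, add_right_comm a N g, hT (a + g)]

theorem stmt_2_general (N q : ℕ) (hdvd : q ∣ N) :
    (∀ a : ℕ, (1 ≤ a ∧ a ≤ q * N ∧ Nat.gcd a (q * N) = 1) ↔
      (∃ γ j : ℕ, (1 ≤ γ ∧ γ ≤ N ∧ Nat.gcd γ N = 1) ∧ j ≤ q - 1 ∧ a = γ + j * N)) ∧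
    (∀ g j' : ℕ, 1 ≤ g → 1 ≤ j' → nGaps (q * N) g j' = q * nGaps N g j') := by
  have hcop (b : ℕ) : Nat.Coprime b (q * N) ↔ Nat.Coprime b N :=
    Nat.coprime_mul_iff_right_of_dvd hdvd
  refine ⟨fun a => ?_, fun g j' _ _ => ?_⟩
  · have hcop_add (γ j : ℕ) : Nat.Coprime (γ + j * N) (q * N) ↔ Nat.Coprime γ N :=
      (hcop _).trans (Nat.coprime_add_mul_right_left γ N j)
    have hblock (a : ℕ) :
        (1 ≤ a ∧ a ≤ q * N) ↔ ∃ γ, (1 ≤ γ ∧ γ ≤ N) ∧ ∃ j < q, a = γ + j * N := by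
      simpa only [mem_Icc] using Nat.mem_Icc_one_mul_iff
    constructor
    · rintro ⟨ha, haq, hcopa⟩
      obtain ⟨γ, hγ, j, hj, rfl⟩ := (hblock a).1 ⟨ha, haq⟩
      exact ⟨γ, j, ⟨hγ.1, hγ.2, (hcop_add γ j).1 hcopa⟩, by omega, rfl⟩
    · rintro ⟨γ, j, ⟨hγ, hγN, hcopγ⟩, hj, rfl⟩
      have hq : 0 < q := Nat.pos_of_dvd_of_pos hdvd (by omega)
      obtain ⟨ha, haq⟩ := (hblock _).2 ⟨γ, ⟨hγ, hγN⟩, j, by omega, rfl⟩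
      exact ⟨ha, haq, (hcop_add γ j).2 hcopγ⟩
  · rw [nGaps_eq_card_isDrivingTerm, nGaps_eq_card_isDrivingTerm,
      filter_congr fun a _ => isDrivingTerm_congr hcop g j' a,
      Nat.card_filter_Icc_one_mul_of_periodic ((Nat.periodic_coprime_left N).isDrivingTerm g j')]

theorem stmt_2 (N q : ℕ) (hN : 0 < N) (hq : q.Prime) (hdvd : q ∣ N) :
    (∀ a : ℕ, (1 ≤ a ∧ a ≤ q * N ∧ Nat.gcd a (q * N) = 1) ↔
      (∃ γ j : ℕ, (1 ≤ γ ∧ γ ≤ N ∧ Nat.gcd γ N = 1) ∧ j ≤ q - 1 ∧ a = γ + j * N)) ∧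
    (∀ g j' : ℕ, 1 ≤ g → 1 ≤ j' → nGaps (q * N) g j' = q * nGaps N g j') :=
  stmt_2_general N q hdvd
end

section
/- Let g ≥ 2 be an even integer and let q̄ be the largest prime factor of g. Then, as k → ∞, the real-valued ratio n_{g,1}(p_k#)/n_{2,1}(p_k#) converges to T_g(q̄#)/n_{2,1}(q̄#), the sum of the initial ratios of driving-term counts at the stage q̄ of Eratosthenes sieve. -/
/-- `totalDT N g` is the total number of driving terms for the gap `g` of all lengths
in the cycle of gaps of `N`. -/
def totalDT (N g : ℕ) : ℕ :=
  ((Finset.Icc 1 N).filter (fun a => Nat.gcd a N = 1 ∧ Nat.gcd (a + g) N = 1)).card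

/-- `nthPrime k` is the `k`-th prime, with `nthPrime 1 = 2`. -/
noncomputable def nthPrime (k : ℕ) : ℕ := Nat.nth Nat.Prime (k - 1)

/-!
Write `c_F(N)` for the number of `a ∈ [1, N]` such that `a + f` is coprime to `N` for every
`f ∈ F`. By the Chinese remainder theorem `c_F(n#) = ∏_{p ≤ n} (p - ω_F(p))`, where `ω_F(p)`
is the number of residues of `F` mod `p`. Beyond `q̄` the sets `{0, g}` and `{0, 2}` both have
two residues, so `T_g(n#) / n_{2,1}(n#) = c_{0,g}(n#) / c_{0,2}(n#)` is constant for `n ≥ q̄`.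
A driving term for `g` of length greater than one is counted by some `c_{0,s,g}` with
`0 < s < g`, and `c_{0,s,g}(n#) / c_{0,2}(n#)` is a constant times
`∏_{g < p ≤ n} (p - 3) / (p - 2) ≤ exp (-∑_{g < p ≤ n} 1 / p)`, which tends to `0`
because the sum of the prime reciprocals diverges.
-/

open Finset Filter Topology

def coprimeTranslateCount (F : Finset ℕ) (N : ℕ) : ℕ :=
  #{a ∈ Icc 1 N | ∀ f ∈ F, (a + f).Coprime N}

noncomputable def unitTranslateCount (F : Finset ℕ) (N : ℕ) : ℕ :=
  Nat.card {x : ZMod N // ∀ f ∈ F, IsUnit (x + f)}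

noncomputable def numResidues (F : Finset ℕ) (p : ℕ) : ℕ :=
  #(F.image (Nat.cast : ℕ → ZMod p))

lemma coprimeTranslateCount_eq_unitTranslateCount (F : Finset ℕ) {N : ℕ} (hN : N ≠ 0) :
    coprimeTranslateCount F N = unitTranslateCount F N := by
  have : NeZero N := ⟨hN⟩
  set P : ℕ → Prop := fun a => ∀ f ∈ F, (a + f).Coprime N
  have hP : ∀ a : ℕ, P a ↔ ∀ f ∈ F, IsUnit ((a : ZMod N) + f) := fun a =>
    forall₂_congr fun f _ => by rw [← Nat.cast_add, ZMod.isUnit_iff_coprime]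
  have hper : Function.Periodic P N := fun a => by
    simp only [P, add_right_comm a N, Nat.coprime_add_self_left]
  have hIcc : Icc 1 N = Ico 1 (1 + N) := by ext; simp only [mem_Icc, mem_Ico]; omega
  rw [coprimeTranslateCount, hIcc, Nat.filter_Ico_card_eq_of_periodic 1 N P hper,
    Nat.count_eq_card_filter_range, unitTranslateCount, Nat.card_eq_fintype_card,
    Fintype.card_subtype]
  refine card_nbij' (Nat.cast) ZMod.val ?_ ?_ ?_ ?_
  · intro a ha
    simp only [coe_filter, mem_range, Set.mem_ofPred_eq, mem_univ, true_and] at ha ⊢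
    exact (hP a).1 ha.2
  · intro x hx
    simp only [coe_filter, mem_range, Set.mem_ofPred_eq, mem_univ, true_and] at hx ⊢
    exact ⟨ZMod.val_lt x, (hP _).2 (by rwa [ZMod.natCast_zmod_val])⟩
  · intro a ha
    simp only [coe_filter, mem_range, Set.mem_ofPred_eq] at ha
    exact ZMod.val_cast_of_lt ha.1
  · intro x _
    exact ZMod.natCast_zmod_val x

lemma unitTranslateCount_mul (F : Finset ℕ) {m n : ℕ} (h : m.Coprime n) :
    unitTranslateCount F (m * n) = unitTranslateCount F m * unitTranslateCount F n := by
  let e := ZMod.chineseRemainder h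
  have key : ∀ x : ZMod (m * n), (∀ f ∈ F, IsUnit (x + f)) ↔
      (∀ f ∈ F, IsUnit ((e x).1 + f)) ∧ ∀ f ∈ F, IsUnit ((e x).2 + f) := fun x => by
    simp only [← forall₂_and]
    refine forall₂_congr fun f _ => ?_
    rw [← MulEquiv.isUnit_map e.toMulEquiv, Prod.isUnit_iff]
    simp [e, map_add, map_natCast]
  rw [unitTranslateCount, unitTranslateCount, unitTranslateCount, ← Nat.card_prod]
  exact Nat.card_congr ((e.toEquiv.subtypeEquiv key).trans Equiv.subtypeProdEquivProd)

lemma unitTranslateCount_prime (F : Finset ℕ) {p : ℕ} (hp : p.Prime) :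
    unitTranslateCount F p = p - numResidues F p := by
  have : Fact p.Prime := ⟨hp⟩
  have hcompl : ({x : ZMod p | ∀ f ∈ F, IsUnit (x + f)} : Finset (ZMod p)) =
      univ \ (F.image (Nat.cast : ℕ → ZMod p)).image Neg.neg := by
    ext x
    simp [isUnit_iff_ne_zero, neg_eq_iff_eq_neg, eq_neg_iff_add_eq_zero, add_comm (x : ZMod p)]
  rw [unitTranslateCount, Nat.card_eq_fintype_card, Fintype.card_subtype, hcompl,
    card_sdiff_of_subset (subset_univ _), card_univ, ZMod.card,
    card_image_of_injective _ neg_injective, numResidues]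

lemma unitTranslateCount_prod_primes (F : Finset ℕ) (s : Finset ℕ) (hs : ∀ p ∈ s, p.Prime) :
    unitTranslateCount F (∏ p ∈ s, p) = ∏ p ∈ s, (p - numResidues F p) := by
  induction s using Finset.induction with
  | empty =>
    simpa [unitTranslateCount] using Nat.card_eq_one_iff_unique.2
      ⟨inferInstance, ⟨⟨0, fun _ _ => isUnit_of_subsingleton _⟩⟩⟩
  | @insert p s hps ih =>
    have hp := hs p (mem_insert_self p s)
    have hs' : ∀ q ∈ s, q.Prime := fun q hq => hs q (mem_insert_of_mem hq)
    have hcop : p.Coprime (∏ q ∈ s, q) := Nat.Coprime.prod_right fun q hq =>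
      (Nat.coprime_primes hp (hs' q hq)).2 fun h => hps (h ▸ hq)
    rw [prod_insert hps, prod_insert hps, unitTranslateCount_mul F hcop,
      unitTranslateCount_prime F hp, ih hs']

lemma coprimeTranslateCount_primorial (F : Finset ℕ) (n : ℕ) :
    coprimeTranslateCount F (primorial n) = ∏ p ∈ Nat.primesLE n, (p - numResidues F p) := by
  rw [coprimeTranslateCount_eq_unitTranslateCount F (primorial_ne_zero n),
    primorial_eq_prod_primesLE,
    unitTranslateCount_prod_primes F _ fun p => Nat.prime_of_mem_primesLE]

lemma coprimeTranslateCount_primorial_div (F G : Finset ℕ) {m n : ℕ} (hmn : m ≤ n) :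
    (coprimeTranslateCount F (primorial n) : ℝ) / coprimeTranslateCount G (primorial n) =
      coprimeTranslateCount F (primorial m) / coprimeTranslateCount G (primorial m) *
        ∏ p ∈ Nat.primesLE n \ Nat.primesLE m,
          ((p - numResidues F p : ℕ) : ℝ) / (p - numResidues G p : ℕ) := by
  have hsub := Nat.primesLE_mono hmn
  simp only [coprimeTranslateCount_primorial, ← prod_sdiff hsub (s₂ := Nat.primesLE n),
    Nat.cast_mul, Nat.cast_prod, prod_div_distrib, mul_div_mul_comm, mul_comm]

lemma numResidues_of_forall_lt {F : Finset ℕ} {p : ℕ} (h : ∀ f ∈ F, f < p) :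
    numResidues F p = #F :=
  card_image_of_injOn fun a ha b hb hab => by
    rwa [ZMod.natCast_eq_natCast_iff' a b p, Nat.mod_eq_of_lt (h a ha),
      Nat.mod_eq_of_lt (h b hb)] at hab

lemma numResidues_pair_of_not_dvd {g p : ℕ} (h : ¬ p ∣ g) : numResidues {0, g} p = 2 := by
  have : ((g : ℕ) : ZMod p) ≠ 0 := by rwa [Ne, ZMod.natCast_eq_zero_iff]
  simp [numResidues, card_pair this.symm]

lemma numResidues_triple {s g p : ℕ} (hs : 0 < s) (hsg : s < g) (hgp : g < p) :
    numResidues {0, s, g} p = 3 := by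
  rw [numResidues_of_forall_lt (by simp only [mem_insert, mem_singleton]; omega),
    card_insert_of_notMem (by simp only [mem_insert, mem_singleton]; omega), card_pair hsg.ne]

lemma totalDT_eq_coprimeTranslateCount (N g : ℕ) :
    totalDT N g = coprimeTranslateCount {0, g} N := by
  simp [totalDT, coprimeTranslateCount, Nat.coprime_iff_gcd_eq_one]

lemma nGaps_two_one_eq_coprimeTranslateCount {N : ℕ} (hN : 2 ∣ N) :
    nGaps N 2 1 = coprimeTranslateCount {0, 2} N := by
  rw [← totalDT_eq_coprimeTranslateCount, nGaps, totalDT]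
  refine congrArg card (filter_congr fun a _ => and_congr_right fun ha => ?_)
  refine and_iff_left_of_imp fun _ => ?_
  have hIoo : Ioo a (a + 2) = {a + 1} := by ext; simp only [mem_Ioo, mem_singleton]; omega
  have hodd : ¬ 2 ∣ a := fun h => by simpa [ha] using Nat.dvd_gcd h hN
  have heven : ¬ (a + 1).gcd N = 1 := fun h => by
    simpa [h] using Nat.dvd_gcd (show 2 ∣ a + 1 by omega) hN
  simp [hIoo, heven]

lemma nGaps_one_le_totalDT (N g : ℕ) : nGaps N g 1 ≤ totalDT N g :=
  card_le_card <| monotone_filter_right _ fun _ _ => And.imp_right And.left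

lemma totalDT_le_nGaps_one_add_sum (N g : ℕ) :
    totalDT N g ≤ nGaps N g 1 + ∑ s ∈ Ioo 0 g, coprimeTranslateCount {0, s, g} N := by
  -- a driving term `a` of length greater than one has a totative `a + s` with `0 < s < g`
  have hcover : {a ∈ Icc 1 N | a.gcd N = 1 ∧ (a + g).gcd N = 1} ⊆
      {a ∈ Icc 1 N | a.gcd N = 1 ∧ (a + g).gcd N = 1 ∧
        #{b ∈ Ioo a (a + g) | b.gcd N = 1} = 1 - 1} ∪
      (Ioo 0 g).biUnion fun s =>
        {a ∈ Icc 1 N | ∀ f ∈ ({0, s, g} : Finset ℕ), (a + f).Coprime N} := by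
    intro a ha
    simp only [mem_filter] at ha
    obtain ⟨haN, ha0, hag⟩ := ha
    rcases (#{b ∈ Ioo a (a + g) | b.gcd N = 1}).eq_zero_or_pos with h | h
    · exact mem_union_left _ (mem_filter.2 ⟨haN, ha0, hag, h⟩)
    · obtain ⟨b, hb⟩ := card_pos.1 h
      simp only [mem_filter, mem_Ioo] at hb
      refine mem_union_right _ (mem_biUnion.2 ⟨b - a, by simp only [mem_Ioo]; omega, ?_⟩)
      have hab : a + (b - a) = b := by omega
      simp [haN, ha0, hag, hab, hb.2, Nat.coprime_iff_gcd_eq_one]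
  calc totalDT N g ≤ _ := card_le_card hcover
    _ ≤ _ := card_union_le _ _
    _ ≤ _ := Nat.add_le_add_left card_biUnion_le _

lemma tendsto_sum_primesLE_one_div :
    Tendsto (fun n => ∑ p ∈ Nat.primesLE n, (1 : ℝ) / p) atTop atTop := by
  have h := (not_summable_iff_tendsto_nat_atTop_of_nonneg
    (Set.indicator_nonneg fun p _ => by positivity)).1 not_summable_one_div_on_primes
  refine (h.comp (tendsto_add_atTop_nat 1)).congr fun n => ?_
  rw [Function.comp_apply, sum_indicator_eq_sum_filter]
  rfl

lemma prime_and_lt_of_mem_primesLE_sdiff {m n p : ℕ}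
    (hp : p ∈ Nat.primesLE n \ Nat.primesLE m) : p.Prime ∧ m < p := by
  rw [Finset.mem_sdiff, Nat.mem_primesLE, Nat.mem_primesLE] at hp
  exact ⟨hp.1.2, not_le.1 fun h => hp.2 ⟨h, hp.1.2⟩⟩

lemma tendsto_prod_primesLE_sdiff_zero (m : ℕ) {f : ℕ → ℝ}
    (hf : ∀ p, p.Prime → m < p → 0 ≤ f p ∧ f p ≤ 1 - 1 / p) :
    Tendsto (fun n => ∏ p ∈ Nat.primesLE n \ Nat.primesLE m, f p) atTop (𝓝 0) := by
  have hsum : Tendsto (fun n => ∑ p ∈ Nat.primesLE n \ Nat.primesLE m, (1 : ℝ) / p)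
      atTop atTop := by
    refine (tendsto_atTop_add_const_right _ (-∑ p ∈ Nat.primesLE m, (1 : ℝ) / p)
      tendsto_sum_primesLE_one_div).congr' ?_
    filter_upwards [eventually_ge_atTop m] with n hn
    rw [← sum_sdiff (Nat.primesLE_mono hn)]
    ring
  have hf' : ∀ n, ∀ p ∈ Nat.primesLE n \ Nat.primesLE m, 0 ≤ f p ∧ f p ≤ 1 - 1 / p :=
    fun n p hp => hf p (prime_and_lt_of_mem_primesLE_sdiff hp).1
      (prime_and_lt_of_mem_primesLE_sdiff hp).2
  refine squeeze_zero (fun n => prod_nonneg fun p hp => (hf' n p hp).1) (fun n => ?_)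
    (Real.tendsto_exp_atBot.comp (tendsto_neg_atTop_atBot.comp hsum))
  calc ∏ p ∈ Nat.primesLE n \ Nat.primesLE m, f p
      ≤ ∏ p ∈ Nat.primesLE n \ Nat.primesLE m, Real.exp (-(1 / p)) :=
        prod_le_prod (fun p hp => (hf' n p hp).1)
          fun p hp => (hf' n p hp).2.trans (Real.one_sub_le_exp_neg _)
    _ = Real.exp (-∑ p ∈ Nat.primesLE n \ Nat.primesLE m, (1 : ℝ) / p) := by
        rw [← sum_neg_distrib, Real.exp_sum]

lemma coprimeTranslateCount_pair_div_eq {g q n : ℕ} (hq : 2 ≤ q)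
    (hmax : ∀ r : ℕ, r.Prime → r ∣ g → r ≤ q) (hqn : q ≤ n) :
    (coprimeTranslateCount {0, g} (primorial n) : ℝ) /
        coprimeTranslateCount {0, 2} (primorial n) =
      coprimeTranslateCount {0, g} (primorial q) /
        coprimeTranslateCount {0, 2} (primorial q) := by
  rw [coprimeTranslateCount_primorial_div _ _ hqn, prod_eq_one, mul_one]
  intro p hp
  obtain ⟨hpp, hqp⟩ := prime_and_lt_of_mem_primesLE_sdiff hp
  rw [numResidues_pair_of_not_dvd fun h => (hmax p hpp h).not_gt hqp,
    numResidues_pair_of_not_dvd fun h => (Nat.le_of_dvd two_pos h).not_gt (by omega)]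
  exact div_self (by norm_cast; omega)

lemma tendsto_triple_div_pair_zero {s g : ℕ} (hs : 0 < s) (hsg : s < g) :
    Tendsto (fun n => (coprimeTranslateCount {0, s, g} (primorial n) : ℝ) /
      coprimeTranslateCount {0, 2} (primorial n)) atTop (𝓝 0) := by
  have hfactor : ∀ n, ∀ p ∈ Nat.primesLE n \ Nat.primesLE g,
      ((p - numResidues {0, s, g} p : ℕ) : ℝ) / (p - numResidues {0, 2} p : ℕ) =
        ((p - 3 : ℕ) : ℝ) / (p - 2 : ℕ) := fun n p hp => by
    have hgp := (prime_and_lt_of_mem_primesLE_sdiff hp).2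
    rw [numResidues_triple hs hsg hgp,
      numResidues_pair_of_not_dvd fun h => (Nat.le_of_dvd two_pos h).not_gt (by omega)]
  have hbound : ∀ p : ℕ, p.Prime → g < p →
      0 ≤ ((p - 3 : ℕ) : ℝ) / (p - 2 : ℕ) ∧
        ((p - 3 : ℕ) : ℝ) / (p - 2 : ℕ) ≤ 1 - 1 / p := by
    intro p _ hgp
    have hp3 : (3 : ℝ) ≤ p := by exact_mod_cast (show 3 ≤ p by omega)
    push_cast [show 3 ≤ p by omega, show 2 ≤ p by omega]
    refine ⟨div_nonneg (by linarith) (by linarith), ?_⟩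
    rw [div_le_iff₀ (by linarith)]
    field_simp
    nlinarith
  have hlim := (tendsto_prod_primesLE_sdiff_zero g hbound).const_mul
    ((coprimeTranslateCount {0, s, g} (primorial g) : ℝ) /
      coprimeTranslateCount {0, 2} (primorial g))
  rw [mul_zero] at hlim
  refine hlim.congr' ?_
  filter_upwards [eventually_ge_atTop g] with n hn
  rw [coprimeTranslateCount_primorial_div _ _ hn, prod_congr rfl (hfactor n)]

theorem tendsto_nGaps_div_primorial {g q : ℕ} (hq : 2 ≤ q)
    (hmax : ∀ r : ℕ, r.Prime → r ∣ g → r ≤ q) :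
    Tendsto (fun n => (nGaps (primorial n) g 1 : ℝ) / nGaps (primorial n) 2 1) atTop
      (𝓝 ((totalDT (primorial q) g : ℝ) / nGaps (primorial q) 2 1)) := by
  have hpair : ∀ n, 2 ≤ n →
      nGaps (primorial n) 2 1 = coprimeTranslateCount {0, 2} (primorial n) :=
    fun n hn => nGaps_two_one_eq_coprimeTranslateCount (Nat.prime_two.dvd_primorial_iff.2 hn)
  have herror : Tendsto (fun n => ∑ s ∈ Ioo 0 g,
      (coprimeTranslateCount {0, s, g} (primorial n) : ℝ) /
        coprimeTranslateCount {0, 2} (primorial n)) atTop (𝓝 0) := by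
    simpa using tendsto_finsetSum _ fun s hs =>
      tendsto_triple_div_pair_zero (mem_Ioo.1 hs).1 (mem_Ioo.1 hs).2
  have hgap : Tendsto (fun n => ((totalDT (primorial n) g : ℝ) - nGaps (primorial n) g 1) /
      coprimeTranslateCount {0, 2} (primorial n)) atTop (𝓝 0) := by
    refine squeeze_zero (fun n => div_nonneg ?_ (Nat.cast_nonneg _)) (fun n => ?_) herror
    · exact sub_nonneg.2 (by exact_mod_cast nGaps_one_le_totalDT _ _)
    · rw [← sum_div]
      refine div_le_div_of_nonneg_right ?_ (Nat.cast_nonneg _)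
      have := totalDT_le_nGaps_one_add_sum (primorial n) g
      rw [sub_le_iff_le_add']
      exact_mod_cast this
  have hlim := (tendsto_const_nhds (x := (totalDT (primorial q) g : ℝ) /
    nGaps (primorial q) 2 1)).sub hgap
  rw [sub_zero] at hlim
  refine hlim.congr' ?_
  filter_upwards [eventually_ge_atTop q] with n hn
  rw [hpair n (hq.trans hn), hpair q hq, totalDT_eq_coprimeTranslateCount,
    ← coprimeTranslateCount_pair_div_eq hq hmax hn, ← totalDT_eq_coprimeTranslateCount,
    ← sub_div, sub_sub_cancel]

lemma tendsto_nthPrime_atTop : Tendsto nthPrime atTop atTop :=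
  (Nat.nth_strictMono Nat.infinite_setOfPred_prime).tendsto_atTop.comp (tendsto_sub_atTop_nat 1)

theorem stmt_6_general (g qbar : ℕ)
    (hq : qbar.Prime) (hmax : ∀ r : ℕ, r.Prime → r ∣ g → r ≤ qbar) :
    Filter.Tendsto (fun k : ℕ =>
        (nGaps (primorial (nthPrime k)) g 1 : ℝ) / (nGaps (primorial (nthPrime k)) 2 1 : ℝ))
      Filter.atTop
      (nhds ((totalDT (primorial qbar) g : ℝ) / (nGaps (primorial qbar) 2 1 : ℝ))) :=
  (tendsto_nGaps_div_primorial hq.two_le hmax).comp tendsto_nthPrime_atTop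

theorem stmt_6 (g qbar : ℕ) (hg2 : 2 ≤ g) (hgeven : Even g)
    (hq : qbar.Prime) (hdvd : qbar ∣ g) (hmax : ∀ r : ℕ, r.Prime → r ∣ g → r ≤ qbar) :
    Filter.Tendsto (fun k : ℕ =>
        (nGaps (primorial (nthPrime k)) g 1 : ℝ) / (nGaps (primorial (nthPrime k)) 2 1 : ℝ))
      Filter.atTop
      (nhds ((totalDT (primorial qbar) g : ℝ) / (nGaps (primorial qbar) 2 1 : ℝ))) :=
  stmt_6_general g qbar hq hmax
end

section
/- Spikes (limsup) in Eratosthenes sieve: for every real M > 0 and every K there exist k ≥ K and three consecutive integers a < b < c coprime to p_k# (with no integer strictly between a and b, nor between b and c, coprime to p_k#) such that (c − b) > M·(b − a); that is, the lim sup over the stages of the sieve of the ratio of a pair of consecutive gaps is ∞. -/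
open Nat

theorem Nat.coprime_primorial_iff {m n : ℕ} :
    Coprime m (primorial n) ↔ ∀ p, p.Prime → p ∣ m → n < p := by
  refine ⟨fun h p hp hpm => ?_, fun h => coprime_of_dvd fun p hp hpm hpn => ?_⟩
  · by_contra hpn
    exact not_coprime_of_dvd_of_dvd hp.one_lt hpm (hp.dvd_primorial_iff.2 (not_lt.1 hpn)) h
  · exact (h p hp hpm).not_ge (hp.dvd_primorial_iff.1 hpn)

def AreConsecutiveCoprime (N a b : ℕ) : Prop :=
  a < b ∧ Coprime a N ∧ Coprime b N ∧ ∀ x, a < x → x < b → ¬ Coprime x N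

theorem areConsecutiveCoprime_primorial_sub_one {n : ℕ} (hn : 2 ≤ n) :
    AreConsecutiveCoprime (primorial n) (primorial n - 1) (primorial n + 1) := by
  have hP : 2 ≤ primorial n := le_primorial_self.trans' hn
  refine ⟨by omega, (coprime_self_sub_left (by omega)).2 (coprime_one_left _),
    coprime_self_add_left.2 (coprime_one_left _), fun x hx₁ hx₂ => ?_⟩
  obtain rfl : x = primorial n := by omega
  rw [Coprime, gcd_self]
  omega

theorem areConsecutiveCoprime_primorial_add_one {n q : ℕ} (hq : q.Prime) (hnq : n < q)
    (hq_min : ∀ r, r.Prime → r < q → r ≤ n) :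
    AreConsecutiveCoprime (primorial n) (primorial n + 1) (primorial n + q) := by
  refine ⟨by linarith [hq.two_le], coprime_self_add_left.2 (coprime_one_left _),
    coprime_self_add_left.2 ?_, fun x hx₁ hx₂ hx => ?_⟩
  · exact coprime_primorial_iff.2 fun r hr hrq => (prime_dvd_prime_iff_eq hr hq).1 hrq ▸ hnq
  · obtain ⟨j, rfl⟩ : ∃ j, x = primorial n + j := ⟨x - primorial n, by omega⟩
    have hj : j ≠ 1 := by omega
    have hmin_le : j.minFac ≤ n :=
      hq_min _ (minFac_prime hj) ((minFac_le (by omega)).trans_lt (by omega))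
    exact (coprime_primorial_iff.1 (coprime_self_add_left.1 hx) _ (minFac_prime hj)
      (minFac_dvd j)).not_ge hmin_le

theorem succ_le_nthPrime (k : ℕ) : k + 1 ≤ nthPrime k := by
  have := add_two_le_nth_prime (k - 1)
  unfold nthPrime
  omega

theorem stmt_18_general (M : ℝ) (K : ℕ) :
    ∃ k ≥ K, ∃ a b c : ℕ, a < b ∧ b < c ∧
      Nat.gcd a (primorial (nthPrime k)) = 1 ∧
      Nat.gcd b (primorial (nthPrime k)) = 1 ∧
      Nat.gcd c (primorial (nthPrime k)) = 1 ∧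
      (∀ x : ℕ, a < x → x < b → Nat.gcd x (primorial (nthPrime k)) ≠ 1) ∧
      (∀ x : ℕ, b < x → x < c → Nat.gcd x (primorial (nthPrime k)) ≠ 1) ∧
      ((c : ℝ) - (b : ℝ)) > M * ((b : ℝ) - (a : ℝ)) := by
  set k := max K ⌈2 * M⌉₊
  set p := nthPrime k
  have hp : p.Prime := prime_nth_prime _
  have hkp : k + 1 ≤ p := succ_le_nthPrime k
  have hq : ∃ q, p + 1 ≤ q ∧ q.Prime := exists_infinite_primes (p + 1)
  obtain ⟨hpq, hq_prime⟩ := Nat.find_spec hq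
  have hq_min : ∀ r, r.Prime → r < Nat.find hq → r ≤ p := fun r hr hrq => by
    by_contra! hpr
    exact Nat.find_min hq hrq ⟨hpr, hr⟩
  obtain ⟨hab, ha, hb, hmid₁⟩ := areConsecutiveCoprime_primorial_sub_one hp.two_le
  obtain ⟨hbc, -, hc, hmid₂⟩ := areConsecutiveCoprime_primorial_add_one hq_prime hpq hq_min
  refine ⟨k, le_max_left _ _, _, _, _, hab, hbc, ha, hb, hc, hmid₁, hmid₂, ?_⟩
  have hk : 2 * M ≤ k := (le_ceil _).trans (mod_cast le_max_right _ _)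
  have hkq : (k : ℝ) + 2 ≤ Nat.find hq := mod_cast (by omega : k + 2 ≤ Nat.find hq)
  push_cast [Nat.cast_sub (primorial_pos p)]
  linarith

theorem stmt_18 (M : ℝ) (hM : 0 < M) (K : ℕ) :
    ∃ k ≥ K, ∃ a b c : ℕ, a < b ∧ b < c ∧
      Nat.gcd a (primorial (nthPrime k)) = 1 ∧
      Nat.gcd b (primorial (nthPrime k)) = 1 ∧
      Nat.gcd c (primorial (nthPrime k)) = 1 ∧
      (∀ x : ℕ, a < x → x < b → Nat.gcd x (primorial (nthPrime k)) ≠ 1) ∧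
      (∀ x : ℕ, b < x → x < c → Nat.gcd x (primorial (nthPrime k)) ≠ 1) ∧
      ((c : ℝ) - (b : ℝ)) > M * ((b : ℝ) - (a : ℝ)) :=
  stmt_18_general M K
end
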